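/- Let ν be the arcsine law on [0,1] and let k ≥ 1. Let D_k^{(J)} be the k×k lower-triangular matrix with entries (D_k^{(J)})_{i,j} = (2^{−2i+1}/√2)·C(2i, i−j) for 1 ≤ j ≤ i ≤ k and 0 otherwise. Then for all 1 ≤ i, j ≤ k, (D_k^{(J)} (D_k^{(J)})^T)_{i,j} = m_{i+j}(ν) − m_i(ν)·m_j(ν). -/

import Mathlib

/-!
Both sides reduce to central binomial coefficients. The arcsine moments are Beta integrals,
`m_r = B(r + 1/2, 1/2) / π = C(2r, r) / 4^r` by Legendre's duplication formula. Up to the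
factor `√2 / 4^i`, row `i` of `D` is `j ↦ C(2i, i + j)`, which vanishes exactly when `j > i`;
so the entry of `D Dᵀ` is `2 / 4^(i+j) · Σ_{l ≥ 1} C(2i, i + l) C(2j, j + l)`. In Vandermonde's
convolution for `C(2(i+j), i+j)` the terms on either side of the middle one `C(2i, i) C(2j, j)`
are, by the symmetry of binomial coefficients, two copies of that sum.
-/

open MeasureTheory Matrix

/-- The arcsine law on `[0,1]`: `ν(dx) = (1/(π√(x(1−x))))·1_{(0,1)}(x) dx`. -/
noncomputable def arcsineLaw : Measure ℝ :=
  volume.withDensity fun x =>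
    ENNReal.ofReal
      (if 0 < x ∧ x < 1 then 1 / (Real.pi * Real.sqrt (x * (1 - x))) else 0)

/-- The `r`-th moment of the arcsine law. -/
noncomputable def mAS (r : ℕ) : ℝ := ∫ x, x ^ r ∂arcsineLaw

/-- The lower-triangular matrix `D_k^{(J)}` (indices `1 ≤ i, j ≤ k`, here realised by
`Fin k` with `i ↦ i+1`): entries `(2^{−2i+1}/√2)·C(2i, i−j)` for `j ≤ i` and `0`
otherwise. -/
noncomputable def DJac (k : ℕ) : Matrix (Fin k) (Fin k) ℝ := fun i j =>
  if j.1 ≤ i.1 then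
    (2 : ℝ) ^ (-(2 * ((i.1 : ℤ) + 1)) + 1) / Real.sqrt 2 *
      ((2 * (i.1 + 1)).choose ((i.1 + 1) - (j.1 + 1)) : ℝ)
  else 0

open Finset Real
open scoped Nat

namespace Nat

theorem sum_range_choose_mul_choose_eq_of_min_le {a b m n : ℕ} (hm : min a b ≤ m) (hn : min a b ≤ n) :
    ∑ l ∈ range m, (2 * a).choose (a + l + 1) * (2 * b).choose (b + l + 1) =
      ∑ l ∈ range n, (2 * a).choose (a + l + 1) * (2 * b).choose (b + l + 1) := by
  wlog hmn : m ≤ n generalizing m n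
  · exact (this hn hm (by omega)).symm
  refine sum_subset (range_subset_range.2 hmn) fun l _ hl => ?_
  rw [mem_range, not_lt] at hl
  rcases min_le_iff.1 (hm.trans hl) with h | h
  · rw [choose_eq_zero_of_lt (by omega), zero_mul]
  · rw [choose_eq_zero_of_lt (by omega : 2 * b < b + l + 1), mul_zero]

theorem centralBinom_add (a b : ℕ) :
    centralBinom (a + b) = centralBinom a * centralBinom b +
      2 * ∑ l ∈ range a, (2 * a).choose (a + l + 1) * (2 * b).choose (b + l + 1) := by
  simp only [centralBinom_eq_two_mul_choose]
  rw [mul_add, add_choose_eq, Finset.Nat.sum_antidiagonal_eq_sum_range_succ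
      (fun p q => (2 * a).choose p * (2 * b).choose q),
    show (a + b).succ = a + (b + 1) by omega, sum_range_add, sum_range_succ', ← sum_range_reflect]
  have lower : ∀ l ∈ range a,
      (2 * a).choose (a - 1 - l) * (2 * b).choose (a + b - (a - 1 - l)) =
        (2 * a).choose (a + l + 1) * (2 * b).choose (b + l + 1) := fun l hl => by
    rw [mem_range] at hl
    rw [choose_symm_of_eq_add (by omega : 2 * a = (a - 1 - l) + (a + l + 1))]
    congr 2
    omega
  have upper : ∀ l ∈ range b,
      (2 * a).choose (a + (l + 1)) * (2 * b).choose (a + b - (a + (l + 1))) =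
        (2 * a).choose (a + l + 1) * (2 * b).choose (b + l + 1) := fun l hl => by
    rw [mem_range] at hl
    rw [choose_symm_of_eq_add (by omega : 2 * b = (a + b - (a + (l + 1))) + (b + l + 1))]
    congr 2
  rw [sum_congr rfl lower, sum_congr rfl upper,
    sum_range_choose_mul_choose_eq_of_min_le (m := b) (n := a) (by omega) (by omega),
    add_zero, Nat.add_sub_cancel_left]
  ring

end Nat

theorem integral_arcsineLaw (f : ℝ → ℝ) :
    ∫ x, f x ∂arcsineLaw = ∫ x in Set.Ioo 0 1, f x / (π * √(x * (1 - x))) := by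
  have hmeas : Measurable fun x : ℝ =>
      if 0 < x ∧ x < 1 then 1 / (π * √(x * (1 - x))) else 0 :=
    Measurable.ite measurableSet_Ioo (by fun_prop) measurable_const
  rw [arcsineLaw, integral_withDensity_eq_integral_toReal_smul hmeas.ennreal_ofReal
    (ae_of_all _ fun _ => ENNReal.ofReal_lt_top), ← integral_indicator measurableSet_Ioo]
  congr 1 with x
  by_cases hx : 0 < x ∧ x < 1
  · rw [if_pos hx, Set.indicator_of_mem (s := Set.Ioo 0 1) hx,
      ENNReal.toReal_ofReal (by positivity), smul_eq_mul, one_div_mul_eq_div]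
  · rw [if_neg hx, Set.indicator_of_notMem (s := Set.Ioo 0 1) hx]
    simp

theorem Complex.betaIntegral_ofReal (u v : ℝ) :
    betaIntegral u v = ↑(∫ x in (0 : ℝ)..1, x ^ (u - 1) * (1 - x) ^ (v - 1)) := by
  rw [betaIntegral, ← intervalIntegral.integral_ofReal]
  refine intervalIntegral.integral_congr fun x hx => ?_
  rw [Set.uIcc_of_le zero_le_one] at hx
  simp only [ofReal_mul, ofReal_cpow hx.1, ofReal_cpow (sub_nonneg.2 hx.2)]
  push_cast
  ring_nf

theorem Real.Gamma_mul_Gamma_eq_mul_integral {u v : ℝ} (hu : 0 < u) (hv : 0 < v) :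
    Gamma u * Gamma v = Gamma (u + v) * ∫ x in (0 : ℝ)..1, x ^ (u - 1) * (1 - x) ^ (v - 1) := by
  have h := Complex.Gamma_mul_Gamma_eq_betaIntegral (s := u) (t := v) (by simpa) (by simpa)
  rw [Complex.betaIntegral_ofReal, ← Complex.ofReal_add, Complex.Gamma_ofReal,
    Complex.Gamma_ofReal, Complex.Gamma_ofReal] at h
  exact_mod_cast h

theorem Real.Gamma_nat_add_half_mul_factorial (r : ℕ) :
    Gamma (r + 1 / 2) * r ! = (2 * r)! * √π / 4 ^ r := by
  have h := Gamma_mul_Gamma_add_half (r + 1 / 2)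
  rw [show (r : ℝ) + 1 / 2 + 1 / 2 = r + 1 by ring,
    show 2 * ((r : ℝ) + 1 / 2) = (2 * r : ℕ) + 1 by push_cast; ring,
    Gamma_nat_eq_factorial, Gamma_nat_eq_factorial,
    show 1 - ((2 * r : ℕ) + 1 : ℝ) = -(2 * r : ℕ) by push_cast; ring, rpow_neg zero_le_two,
    rpow_natCast, pow_mul] at h
  rw [h]
  norm_num
  ring

theorem mAS_eq_inv_pi_mul_integral (r : ℕ) :
    mAS r =
      π⁻¹ * ∫ x in (0 : ℝ)..1, x ^ ((r + 1 / 2 : ℝ) - 1) * (1 - x) ^ ((1 / 2 : ℝ) - 1) := by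
  rw [mAS, integral_arcsineLaw, intervalIntegral.integral_of_le zero_le_one,
    integral_Ioc_eq_integral_Ioo, ← integral_const_mul]
  refine setIntegral_congr_fun measurableSet_Ioo fun x ⟨hx0, hx1⟩ => ?_
  have h1 : 0 < 1 - x := sub_pos.2 hx1
  rw [show (r + 1 / 2 : ℝ) - 1 = r - 1 / 2 by ring, show (1 / 2 : ℝ) - 1 = -(1 / 2) by ring,
    rpow_sub hx0, rpow_natCast, rpow_neg h1.le, ← sqrt_eq_rpow, ← sqrt_eq_rpow,
    sqrt_mul hx0.le]
  field_simp

theorem mAS_eq_centralBinom_div (r : ℕ) : mAS r = Nat.centralBinom r / 4 ^ r := by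
  have hbeta := Gamma_mul_Gamma_eq_mul_integral (u := r + 1 / 2) (v := 1 / 2) (by positivity)
    (by positivity)
  rw [show (r + 1 / 2 : ℝ) + 1 / 2 = r + 1 by ring, Gamma_nat_eq_factorial,
    Gamma_one_half_eq] at hbeta
  have hG := Gamma_nat_add_half_mul_factorial r
  rw [eq_div_iff (by positivity)] at hG
  have hfac : (Nat.centralBinom r : ℝ) * r ! * r ! = (2 * r)! := by
    rw [Nat.centralBinom_eq_two_mul_choose, two_mul]
    exact_mod_cast Nat.add_choose_mul_factorial_mul_factorial r r
  have hr : (r ! : ℝ) ^ 2 ≠ 0 := by positivity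
  rw [mAS_eq_inv_pi_mul_integral, inv_mul_eq_div, div_eq_div_iff pi_ne_zero (by positivity),
    ← mul_left_inj' hr]
  linear_combination (-(4 ^ r * r !)) * hbeta + √π * hG
    + ((2 * r)! : ℝ) * mul_self_sqrt pi_pos.le - π * hfac

theorem two_zpow_div_sqrt_two (n : ℕ) :
    (2 : ℝ) ^ (-(2 * (n : ℤ)) + 1) / √2 = √2 / 4 ^ n := by
  rw [zpow_add₀ two_ne_zero, _root_.zpow_neg, _root_.zpow_mul, zpow_one,
    div_eq_div_iff (by positivity) (by positivity), mul_right_comm, mul_self_sqrt zero_le_two]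
  norm_num

theorem DJac_apply (k : ℕ) (i j : Fin k) :
    DJac k i j = √2 / 4 ^ (i.1 + 1) * ((2 * (i.1 + 1)).choose (i.1 + 1 + j.1 + 1) : ℝ) := by
  rw [DJac]
  split_ifs with hji
  · rw [← two_zpow_div_sqrt_two, Nat.choose_symm_of_eq_add
      (by omega : 2 * (i.1 + 1) = (i.1 + 1 - (j.1 + 1)) + (i.1 + 1 + j.1 + 1))]
    push_cast
    rfl
  · rw [Nat.choose_eq_zero_of_lt (by omega), Nat.cast_zero, mul_zero]

theorem DJac_mul_transpose_apply (k : ℕ) (i j : Fin k) :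
    (DJac k * (DJac k)ᵀ) i j = 2 / (4 ^ (i.1 + 1) * 4 ^ (j.1 + 1)) *
      ((∑ l ∈ range (i.1 + 1), (2 * (i.1 + 1)).choose (i.1 + 1 + l + 1) *
        (2 * (j.1 + 1)).choose (j.1 + 1 + l + 1) : ℕ) : ℝ) := by
  simp only [mul_apply, transpose_apply, DJac_apply]
  rw [Fin.sum_univ_eq_sum_range (fun l =>
      √2 / 4 ^ (i.1 + 1) * ((2 * (i.1 + 1)).choose (i.1 + 1 + l + 1) : ℝ) *
        (√2 / 4 ^ (j.1 + 1) * ((2 * (j.1 + 1)).choose (j.1 + 1 + l + 1) : ℝ))) k,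
    Nat.sum_range_choose_mul_choose_eq_of_min_le (m := i.1 + 1) (n := k) (by omega) (by omega),
    Nat.cast_sum, mul_sum]
  refine sum_congr rfl fun l _ => ?_
  rw [mul_mul_mul_comm, div_mul_div_comm, mul_self_sqrt zero_le_two]
  push_cast
  ring

theorem DJac_mul_transpose_eq_arcsine_cov_general (k : ℕ) (i j : Fin k) :
    (DJac k * (DJac k)ᵀ) i j =
      mAS ((i.1 + 1) + (j.1 + 1)) - mAS (i.1 + 1) * mAS (j.1 + 1) := by
  rw [DJac_mul_transpose_apply, mAS_eq_centralBinom_div, mAS_eq_centralBinom_div,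
    mAS_eq_centralBinom_div, Nat.centralBinom_add, pow_add]
  push_cast
  field_simp
  ring

/-- The covariance representation for the Jacobi ensemble:
`(D_k^{(J)} (D_k^{(J)})^T)_{i,j} = m_{i+j}(ν) − m_i(ν)·m_j(ν)`, where `ν` is the
arcsine law on `[0,1]`. -/
theorem DJac_mul_transpose_eq_arcsine_cov (k : ℕ) (hk : 1 ≤ k) (i j : Fin k) :
    (DJac k * (DJac k)ᵀ) i j =
      mAS ((i.1 + 1) + (j.1 + 1)) - mAS (i.1 + 1) * mAS (j.1 + 1) :=
  DJac_mul_transpose_eq_arcsine_cov_general k i j
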